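/- arXiv:1302.2857 — 2 statements merged into one kernel-verified Lean document; each statement's English description precedes it below -/
import Mathlib

section
/- Let (I,J,K) be a hypercomplex structure on E. For arbitrary λ₁, λ₂, λ₃ ∈ ℝ, the bracket {f,g} = ⟨(λ₁I + λ₂J + λ₃K)(Df), Dg⟩ on A satisfies the Jacobi identity: {{f,g},h} + {{g,h},f} + {{h,f},g} = 0 for all f, g, h ∈ A. (This expresses that the Poisson brackets associated with I, J and K pairwise commute in the Schouten sense.) -/
open scoped TensorProduct
section BC

variable {M N P : Type} [AddCommGroup M] [Module ℝ M] [AddCommGroup N] [Module ℝ N]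
  [AddCommGroup P] [Module ℝ P]

/-- Complex-bilinear extension of an `ℝ`-bilinear map to the complexifications. -/
noncomputable def bcBilin (B : M →ₗ[ℝ] N →ₗ[ℝ] P) :
    ℂ ⊗[ℝ] M →ₗ[ℂ] ℂ ⊗[ℝ] N →ₗ[ℂ] ℂ ⊗[ℝ] P :=
  LinearMap.liftBaseChange ℂ ((LinearMap.baseChangeHom ℝ ℂ N P) ∘ₗ B)

/-- Complex conjugation on the complexification `ℂ ⊗[ℝ] M`. -/
noncomputable def conjT (M : Type) [AddCommGroup M] [Module ℝ M] :
    ℂ ⊗[ℝ] M →ₗ[ℝ] ℂ ⊗[ℝ] M :=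
  TensorProduct.map Complex.conjAe.toLinearMap LinearMap.id

/-- The `i`-eigenspace of a `ℂ`-linear endomorphism of `ℂ ⊗[ℝ] M`. -/
def eigP (Jc : ℂ ⊗[ℝ] M →ₗ[ℂ] ℂ ⊗[ℝ] M) : Set (ℂ ⊗[ℝ] M) :=
  {e | Jc e = Complex.I • e}

/-- The `-i`-eigenspace of a `ℂ`-linear endomorphism of `ℂ ⊗[ℝ] M`. -/
def eigM (Jc : ℂ ⊗[ℝ] M →ₗ[ℂ] ℂ ⊗[ℝ] M) : Set (ℂ ⊗[ℝ] M) :=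
  {e | Jc e = -(Complex.I • e)}

end BC

/-- An (algebraic) Courant algebroid: a commutative `ℝ`-algebra `A`, an `A`-module `E`,
a nondegenerate symmetric `A`-bilinear pairing, an anchor with values in `ℝ`-linear
derivations of `A`, a map `Dm : A → E`, and an `ℝ`-bilinear Dorfman bracket. -/
structure CourantAlgebroid (A E : Type) [CommRing A] [Algebra ℝ A]
    [AddCommGroup E] [Module ℝ E] [Module A E] [IsScalarTower ℝ A E] : Type where
  pair : E →ₗ[A] E →ₗ[A] A
  pair_symm : ∀ x y, pair x y = pair y x
  pair_nondeg : ∀ x, (∀ y, pair x y = 0) → x = 0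
  anchor : E →ₗ[A] Derivation ℝ A A
  Dm : A →ₗ[ℝ] E
  pair_Dm : ∀ (f : A) (x : E), pair (Dm f) x = (1/2 : ℝ) • anchor x f
  brac : E →ₗ[ℝ] E →ₗ[ℝ] E
  brac_leibniz : ∀ x y z, brac x (brac y z) = brac (brac x y) z + brac y (brac x z)
  anchor_brac : ∀ (x y : E) (f : A),
    anchor (brac x y) f = anchor x (anchor y f) - anchor y (anchor x f)
  brac_smul : ∀ (f : A) (x y : E), brac x (f • y) = anchor x f • y + f • brac x y
  brac_add_swap : ∀ x y, brac x y + brac y x = (2 : ℝ) • Dm (pair x y)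
  Dm_brac : ∀ (f : A) (x : E), brac (Dm f) x = 0
  anchor_pair : ∀ x y z, anchor x (pair y z) = pair (brac x y) z + pair y (brac x z)

namespace CourantAlgebroid

variable {A E : Type} [CommRing A] [Algebra ℝ A]
    [AddCommGroup E] [Module ℝ E] [Module A E] [IsScalarTower ℝ A E]

/-- The Nijenhuis concomitant of two operators with respect to a bracket. -/
def nijGen {M : Type*} [AddCommGroup M] (br : M → M → M) (F G : M → M) (U V : M) : M :=
  br (F U) (G V) - F (br U (G V)) - G (br (F U) V) + F (G (br U V))
    + br (G U) (F V) - G (br U (F V)) - F (br (G U) V) + G (F (br U V))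

/-- The Nijenhuis concomitant `N(F,G)` of two `A`-linear endomorphisms of `E`. -/
def nij (C : CourantAlgebroid A E) (F G : E →ₗ[A] E) (U V : E) : E :=
  nijGen (fun x y => C.brac x y) (fun e => F e) (fun e => G e) U V

/-- An almost complex structure: an orthogonal endomorphism squaring to `-1`. -/
def IsAlmostComplexStr (C : CourantAlgebroid A E) (J : E →ₗ[A] E) : Prop :=
  (∀ e, J (J e) = -e) ∧ ∀ x y, C.pair (J x) (J y) = C.pair x y

/-- A complex structure: an almost complex structure with vanishing Nijenhuis concomitant. -/
def IsComplexStr (C : CourantAlgebroid A E) (J : E →ₗ[A] E) : Prop :=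
  C.IsAlmostComplexStr J ∧ ∀ U V, C.nij J J U V = 0

/-- An almost hypercomplex structure: a triple of almost complex structures
satisfying the quaternionic relations. -/
def IsAlmostHypercomplex (C : CourantAlgebroid A E) (I J K : E →ₗ[A] E) : Prop :=
  C.IsAlmostComplexStr I ∧ C.IsAlmostComplexStr J ∧ C.IsAlmostComplexStr K ∧
    ∀ e, I (J (K e)) = -e

/-- A hypercomplex structure: an almost hypercomplex structure all of whose six
Nijenhuis concomitants vanish. -/
def IsHypercomplex (C : CourantAlgebroid A E) (I J K : E →ₗ[A] E) : Prop :=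
  C.IsAlmostHypercomplex I J K ∧
    (∀ U V, C.nij I I U V = 0) ∧ (∀ U V, C.nij I J U V = 0) ∧ (∀ U V, C.nij I K U V = 0) ∧
    (∀ U V, C.nij J J U V = 0) ∧ (∀ U V, C.nij J K U V = 0) ∧ (∀ U V, C.nij K K U V = 0)

/-- The Poisson-type bracket on `A` induced by a skew-symmetric endomorphism `F`. -/
def pb (C : CourantAlgebroid A E) (F : E →ₗ[A] E) (f g : A) : A :=
  C.pair (F (C.Dm f)) (C.Dm g)

/-- `Δ_f(U,V)` associated with an almost hypercomplex triple. -/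
def Delta (C : CourantAlgebroid A E) (I J K : E →ₗ[A] E) (f : A) (U V : E) : E :=
  C.pair U V • C.Dm f + C.pair (I U) V • I (C.Dm f) + C.pair (J U) V • J (C.Dm f)
    + C.pair (K U) V • K (C.Dm f)

/-- A hypercomplex connection relative to an almost hypercomplex triple. -/
def IsHConn (C : CourantAlgebroid A E) (I J K : E →ₗ[A] E)
    (conn : E →ₗ[ℝ] E →ₗ[ℝ] E) : Prop :=
  (∀ (f : A) (U V : E), conn (f • U) V = f • conn U V) ∧
  (∀ (f : A) (U V : E),
    conn U (f • V) = C.anchor U f • V + f • conn U V - C.Delta I J K f U V)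

/-- The torsion of an `ℝ`-bilinear connection. -/
noncomputable def torsion (C : CourantAlgebroid A E) (conn : E →ₗ[ℝ] E →ₗ[ℝ] E) (U V : E) : E :=
  conn U V - conn V U - (1/2 : ℝ) • (C.brac U V - C.brac V U)

/-- The canonical hypercomplex connection. -/
noncomputable def hconn (C : CourantAlgebroid A E) (I J K : E →ₗ[A] E) (U V : E) : E :=
  -((1/2 : ℝ) • K (C.brac (J V) (I U) - J (C.brac V (I U)) - I (C.brac (J V) U)
      + J (I (C.brac V U))))

/-- The pairing as an `ℝ`-bilinear map. -/
noncomputable def pairR (C : CourantAlgebroid A E) : E →ₗ[ℝ] E →ₗ[ℝ] A :=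
  LinearMap.mk₂ ℝ (fun x y => C.pair x y)
    (fun x x' y => by simp)
    (fun r x y => by
      show C.pair (r • x) y = r • C.pair x y
      rw [← algebraMap_smul A r x, map_smul, LinearMap.smul_apply, algebraMap_smul])
    (fun x y y' => by simp)
    (fun r x y => by
      show C.pair x (r • y) = r • C.pair x y
      rw [← algebraMap_smul A r y, map_smul, algebraMap_smul])

/-- The anchor as an `ℝ`-bilinear map `E → A → A`. -/
noncomputable def rhoR (C : CourantAlgebroid A E) : E →ₗ[ℝ] A →ₗ[ℝ] A :=
  LinearMap.mk₂ ℝ (fun x f => C.anchor x f)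
    (fun x x' f => by simp)
    (fun r x f => by
      show C.anchor (r • x) f = r • C.anchor x f
      rw [← algebraMap_smul A r x, map_smul, Derivation.smul_apply, algebraMap_smul])
    (fun x f f' => by simp)
    (fun r x f => by simp)

/-- The `A`-module structure on `E` as an `ℝ`-bilinear map. -/
noncomputable def smulR (A E : Type) [CommRing A] [Algebra ℝ A]
    [AddCommGroup E] [Module ℝ E] [Module A E] [IsScalarTower ℝ A E] :
    A →ₗ[ℝ] E →ₗ[ℝ] E :=
  LinearMap.mk₂ ℝ (fun a e => a • e)
    (fun a a' e => add_smul a a' e)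
    (fun r a e => smul_assoc r a e)
    (fun a e e' => smul_add a e e')
    (fun r a e => smul_comm a r e)

/-- Complex-bilinear extension of the pairing. -/
noncomputable def pairC (C : CourantAlgebroid A E) :
    ℂ ⊗[ℝ] E →ₗ[ℂ] ℂ ⊗[ℝ] E →ₗ[ℂ] ℂ ⊗[ℝ] A := bcBilin C.pairR

/-- Complex-bilinear extension of the Dorfman bracket. -/
noncomputable def bracC (C : CourantAlgebroid A E) :
    ℂ ⊗[ℝ] E →ₗ[ℂ] ℂ ⊗[ℝ] E →ₗ[ℂ] ℂ ⊗[ℝ] E := bcBilin C.brac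

/-- Complex-bilinear extension of the anchor. -/
noncomputable def rhoC (C : CourantAlgebroid A E) :
    ℂ ⊗[ℝ] E →ₗ[ℂ] ℂ ⊗[ℝ] A →ₗ[ℂ] ℂ ⊗[ℝ] A := bcBilin C.rhoR

/-- Complex-bilinear extension of the `A`-action on `E`. -/
noncomputable def smulC (C : CourantAlgebroid A E) :
    ℂ ⊗[ℝ] A →ₗ[ℂ] ℂ ⊗[ℝ] E →ₗ[ℂ] ℂ ⊗[ℝ] E := bcBilin (smulR A E)

/-- The `ℂ`-linear extension of an `A`-linear endomorphism of `E` to `ℂ ⊗[ℝ] E`. -/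
noncomputable def cext (F : E →ₗ[A] E) : ℂ ⊗[ℝ] E →ₗ[ℂ] ℂ ⊗[ℝ] E :=
  (F.restrictScalars ℝ).baseChange ℂ

/-- `Ω^♯ = (1/2)(I + iK)` associated with an (almost) hypercomplex triple. -/
noncomputable def OmS (I K : E →ₗ[A] E) : ℂ ⊗[ℝ] E →ₗ[ℂ] ℂ ⊗[ℝ] E :=
  (1/2 : ℂ) • (cext I + Complex.I • cext K)

/-- `Ω̄^♯ = (1/2)(I - iK)` associated with an (almost) hypercomplex triple. -/
noncomputable def ObS (I K : E →ₗ[A] E) : ℂ ⊗[ℝ] E →ₗ[ℂ] ℂ ⊗[ℝ] E :=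
  (1/2 : ℂ) • (cext I - Complex.I • cext K)

/-- `Ω(ξ,η) = ⟨Ω^♯ξ, η⟩`. -/
noncomputable def Omf (C : CourantAlgebroid A E) (I K : E →ₗ[A] E)
    (x y : ℂ ⊗[ℝ] E) : ℂ ⊗[ℝ] A :=
  C.pairC (OmS I K x) y

/-- The complexified hypercomplex connection on `ℂ ⊗[ℝ] E`. -/
noncomputable def hconnC (C : CourantAlgebroid A E) (I J K : E →ₗ[A] E)
    (U V : ℂ ⊗[ℝ] E) : ℂ ⊗[ℝ] E :=
  -((1/2 : ℂ) • cext K (C.bracC (cext J V) (cext I U) - cext J (C.bracC V (cext I U))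
      - cext I (C.bracC (cext J V) U) + cext J (cext I (C.bracC V U))))

end CourantAlgebroid

open CourantAlgebroid

/-!
Write `{f,g} = ⟨F(Df), Dg⟩ = ½ ρ(F Df) g` for `F = λ₁I + λ₂J + λ₃K`. The Nijenhuis concomitant
is symmetric and bilinear in its two operators, so `N(F,F)` is a combination of the six vanishing
concomitants and vanishes. Since `Df ∘ · = 0`, evaluating `N(F,F)` on `Df, Dg` gives
`F Df ∘ F Dg = F (F Df ∘ Dg) = F D(ρ(F Df) g)`, i.e. `F D{f,g} = ½ F Df ∘ F Dg`. As the anchor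
is a morphism of brackets, `ρ(F D{f,g}) = ½ [ρ(F Df), ρ(F Dg)]`, which is the Leibniz form of the
Jacobi identity; skew-symmetry of `F`, inherited from `I`, `J`, `K`, turns it into the cyclic form.
-/

namespace CourantAlgebroid

variable {A E : Type} [CommRing A] [Algebra ℝ A] [AddCommGroup E] [Module ℝ E]
    [Module A E] [IsScalarTower ℝ A E] (C : CourantAlgebroid A E)

def IsSkew (F : E →ₗ[A] E) : Prop :=
  ∀ x y, C.pair (F x) y = -C.pair x (F y)

variable {C}

theorem IsAlmostComplexStr.isSkew {J : E →ₗ[A] E} (hJ : C.IsAlmostComplexStr J) : C.IsSkew J := by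
  intro x y
  have h := hJ.2 x (J y)
  rw [hJ.1 y, map_neg] at h
  linear_combination -h

theorem IsSkew.add {F G : E →ₗ[A] E} (hF : C.IsSkew F) (hG : C.IsSkew G) : C.IsSkew (F + G) := by
  intro x y
  simp only [LinearMap.add_apply, map_add, hF x y, hG x y]
  ring

theorem IsSkew.smul {F : E →ₗ[A] E} (hF : C.IsSkew F) (r : ℝ) : C.IsSkew (r • F) := by
  intro x y
  simp only [LinearMap.smul_apply, LinearMap.map_smul_of_tower, hF x y, smul_neg]

theorem IsSkew.pb_comm {F : E →ₗ[A] E} (hF : C.IsSkew F) (f g : A) :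
    C.pb F f g = -C.pb F g f := by
  rw [pb, hF, C.pair_symm, pb]

variable (C)

theorem anchor_real_smul (r : ℝ) (x : E) (f : A) : C.anchor (r • x) f = r • C.anchor x f := by
  rw [← algebraMap_smul A r x, map_smul, Derivation.smul_apply, algebraMap_smul]

theorem brac_Dm (x : E) (f : A) : C.brac x (C.Dm f) = C.Dm (C.anchor x f) := by
  have h := C.brac_add_swap x (C.Dm f)
  rw [C.Dm_brac, add_zero] at h
  rw [h, C.pair_symm, C.pair_Dm, map_smul, smul_smul]
  norm_num

theorem nij_linComb_self_eq_zero {I J K : E →ₗ[A] E} (h : C.IsHypercomplex I J K)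
    (l1 l2 l3 : ℝ) (U V : E) :
    C.nij (l1 • I + l2 • J + l3 • K) (l1 • I + l2 • J + l3 • K) U V = 0 := by
  obtain ⟨-, hII, hIJ, hIK, hJJ, hJK, hKK⟩ := h
  simp only [nij, nijGen] at hII hIJ hIK hJJ hJK hKK ⊢
  simp only [LinearMap.add_apply, LinearMap.smul_apply, map_add, map_smul,
    LinearMap.map_smul_of_tower]
  linear_combination (norm := module) ((l1 * l1 : ℝ) • hII U V) + ((2 * l1 * l2 : ℝ) • hIJ U V)
    + ((2 * l1 * l3 : ℝ) • hIK U V) + ((l2 * l2 : ℝ) • hJJ U V) + ((2 * l2 * l3 : ℝ) • hJK U V)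
    + ((l3 * l3 : ℝ) • hKK U V)

theorem brac_apply_Dm_apply_Dm {F : E →ₗ[A] E} (hN : ∀ U V, C.nij F F U V = 0) (f g : A) :
    C.brac (F (C.Dm f)) (F (C.Dm g)) = F (C.brac (F (C.Dm f)) (C.Dm g)) := by
  have h := hN (C.Dm f) (C.Dm g)
  simp only [nij, nijGen, C.Dm_brac, map_zero, sub_zero, add_zero] at h
  linear_combination (norm := module) (1 / 2 : ℝ) • h

theorem pb_eq_anchor (F : E →ₗ[A] E) (f g : A) :
    C.pb F f g = (1 / 2 : ℝ) • C.anchor (F (C.Dm f)) g := by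
  rw [pb, C.pair_symm, C.pair_Dm]

theorem pb_neg_left (F : E →ₗ[A] E) (f g : A) : C.pb F (-f) g = -C.pb F f g := by
  simp only [pb, map_neg, LinearMap.neg_apply]

theorem pb_pb_left {F : E →ₗ[A] E} (hN : ∀ U V, C.nij F F U V = 0) (f g h : A) :
    C.pb F (C.pb F f g) h = C.pb F f (C.pb F g h) - C.pb F g (C.pb F f h) := by
  have hD : F (C.Dm (C.pb F f g)) = (1 / 2 : ℝ) • C.brac (F (C.Dm f)) (F (C.Dm g)) := by
    rw [C.pb_eq_anchor, map_smul, F.map_smul_of_tower, ← C.brac_Dm,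
      C.brac_apply_Dm_apply_Dm hN]
  rw [C.pb_eq_anchor F (C.pb F f g), hD, C.anchor_real_smul, C.anchor_brac]
  simp only [C.pb_eq_anchor, Derivation.map_smul]
  module

theorem pb_jacobi {F : E →ₗ[A] E} (hF : C.IsSkew F) (hN : ∀ U V, C.nij F F U V = 0)
    (f g h : A) :
    C.pb F (C.pb F f g) h + C.pb F (C.pb F g h) f + C.pb F (C.pb F h f) g = 0 := by
  rw [C.pb_pb_left hN, hF.pb_comm f (C.pb F g h), hF.pb_comm g (C.pb F f h),
    hF.pb_comm f h, C.pb_neg_left]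
  ring

end CourantAlgebroid

theorem stmt4 {A E : Type} [CommRing A] [Algebra ℝ A] [AddCommGroup E] [Module ℝ E]
    [Module A E] [IsScalarTower ℝ A E] (C : CourantAlgebroid A E) (I J K : E →ₗ[A] E)
    (h : C.IsHypercomplex I J K) (l1 l2 l3 : ℝ) :
    ∀ f g h' : A,
      C.pb (l1 • I + l2 • J + l3 • K) (C.pb (l1 • I + l2 • J + l3 • K) f g) h' +
      C.pb (l1 • I + l2 • J + l3 • K) (C.pb (l1 • I + l2 • J + l3 • K) g h') f +
      C.pb (l1 • I + l2 • J + l3 • K) (C.pb (l1 • I + l2 • J + l3 • K) h' f) g = 0 := by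
  obtain ⟨hI, hJ, hK, -⟩ := h.1
  have hF : C.IsSkew (l1 • I + l2 • J + l3 • K) :=
    ((hI.isSkew.smul l1).add (hJ.isSkew.smul l2)).add (hK.isSkew.smul l3)
  exact C.pb_jacobi hF (C.nij_linComb_self_eq_zero h l1 l2 l3)
end

section
/- Let (I,J,K) be an almost hypercomplex structure on E. If there exists a hypercomplex connection ∇ satisfying ∇I = ∇J = ∇K = 0 and T^∇(U,V) = I(D⟨U,IV⟩) + J(D⟨U,JV⟩) + K(D⟨U,KV⟩) for all U, V ∈ E, then N(I,J) = 0. -/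
/-!
Writing the torsion condition together with `U ∘ V + V ∘ U = 2 D⟨U, V⟩` expresses the Dorfman
bracket as `U ∘ V = ∇_U V - ∇_V U + D⟨U, V⟩ - T(U, V)`, and `N(I, J)` is additive in the bracket.
The `∇`-part drops out because `∇` commutes with `I` and `J`; the part `D⟨U, V⟩` because `I` and
`J` are skew for the pairing and anticommute; and the prescribed torsion part by the quaternionic
relations.
-/

open scoped TensorProduct
open CourantAlgebroid

section Nijenhuis

variable {M 𝓕 : Type*} [AddCommGroup M] [FunLike 𝓕 M M] [AddMonoidHomClass 𝓕 M M]

theorem nijGen_add (br₁ br₂ : M → M → M) (F G : 𝓕) (U V : M) :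
    nijGen (fun x y => br₁ x y + br₂ x y) F G U V = nijGen br₁ F G U V + nijGen br₂ F G U V := by
  simp only [nijGen, map_add]
  abel

theorem nijGen_sub (br₁ br₂ : M → M → M) (F G : 𝓕) (U V : M) :
    nijGen (fun x y => br₁ x y - br₂ x y) F G U V = nijGen br₁ F G U V - nijGen br₂ F G U V := by
  simp only [nijGen, map_sub]
  abel

theorem nijGen_sub_swap_eq_zero (D : M → M → M) (F G : 𝓕)
    (hF : ∀ U V, D U (F V) = F (D U V)) (hG : ∀ U V, D U (G V) = G (D U V)) (U V : M) :
    nijGen (fun x y => D x y - D y x) F G U V = 0 := by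
  simp only [nijGen, hF, hG, map_sub]
  abel

end Nijenhuis

namespace CourantAlgebroid

variable {A E : Type} [CommRing A] [Algebra ℝ A]
    [AddCommGroup E] [Module ℝ E] [Module A E] [IsScalarTower ℝ A E] (C : CourantAlgebroid A E)

theorem brac_eq_sub_torsion (D : E →ₗ[ℝ] E →ₗ[ℝ] E) (U V : E) :
    C.brac U V = D U V - D V U + C.Dm (C.pair U V) - C.torsion D U V := by
  rw [torsion]
  linear_combination (norm := module) (1/2 : ℝ) • C.brac_add_swap U V

theorem IsAlmostComplexStr.pair_map_left {C : CourantAlgebroid A E} {J : E →ₗ[A] E}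
    (hJ : C.IsAlmostComplexStr J) (x y : E) : C.pair (J x) y = -C.pair x (J y) := by
  rw [← hJ.2 (J x) y, hJ.1, map_neg, LinearMap.neg_apply]

theorem nijGen_Dm_pair_eq_zero (F G : E →ₗ[A] E) (hF : ∀ x y, C.pair (F x) y = -C.pair x (F y))
    (hG : ∀ x y, C.pair (G x) y = -C.pair x (G y)) (hFG : ∀ x, F (G x) = -G (F x)) (U V : E) :
    nijGen (fun x y => C.Dm (C.pair x y)) F G U V = 0 := by
  simp only [nijGen, hF, hG, hFG, map_neg, neg_neg]
  abel

def hyperTorsion (I J K : E →ₗ[A] E) (U V : E) : E :=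
  I (C.Dm (C.pair U (I V))) + J (C.Dm (C.pair U (J V))) + K (C.Dm (C.pair U (K V)))

namespace IsAlmostHypercomplex

variable {C} {I J K : E →ₗ[A] E} (h : C.IsAlmostHypercomplex I J K)
include h

theorem I_J (e : E) : I (J e) = K e := by
  simpa only [h.2.2.1.1, map_neg, neg_inj] using h.2.2.2 (K e)

theorem J_K (e : E) : J (K e) = I e := by
  simpa only [h.1.1, map_neg, neg_inj] using congrArg I (h.2.2.2 e)

theorem I_K (e : E) : I (K e) = -J e := by
  rw [← h.I_J, h.1.1]

theorem J_I (e : E) : J (I e) = -K e := by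
  rw [← h.J_K, h.2.1.1]

theorem I_J_eq_neg_J_I (e : E) : I (J e) = -J (I e) := by
  rw [h.I_J, h.J_I, neg_neg]

theorem K_J (e : E) : K (J e) = -I e := by
  rw [← h.I_J, h.2.1.1, map_neg]

theorem K_I (e : E) : K (I e) = J e := by
  rw [← h.I_J, h.J_I, map_neg, h.I_K, neg_neg]

theorem nijGen_hyperTorsion_eq_zero (U V : E) :
    nijGen (C.hyperTorsion I J K) I J U V = 0 := by
  simp only [nijGen, hyperTorsion, map_add, map_neg, h.1.pair_map_left, h.2.1.pair_map_left,
    h.1.1, h.2.1.1, h.I_J, h.J_K, h.I_K, h.J_I, h.K_J, h.K_I, neg_neg]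
  abel

end IsAlmostHypercomplex

end CourantAlgebroid

theorem stmt9 {A E : Type} [CommRing A] [Algebra ℝ A] [AddCommGroup E] [Module ℝ E]
    [Module A E] [IsScalarTower ℝ A E] (C : CourantAlgebroid A E) (I J K : E →ₗ[A] E)
    (h : C.IsAlmostHypercomplex I J K)
    (hex : ∃ D : E →ₗ[ℝ] E →ₗ[ℝ] E, C.IsHConn I J K D ∧
      (∀ U V : E, D U (I V) = I (D U V)) ∧
      (∀ U V : E, D U (J V) = J (D U V)) ∧
      (∀ U V : E, D U (K V) = K (D U V)) ∧
      (∀ U V : E, C.torsion D U V =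
        I (C.Dm (C.pair U (I V))) + J (C.Dm (C.pair U (J V))) + K (C.Dm (C.pair U (K V))))) :
    ∀ U V : E, C.nij I J U V = 0 := by
  obtain ⟨D, -, hDI, hDJ, -, hT⟩ := hex
  intro U V
  have hbrac (x y : E) :
      C.brac x y = D x y - D y x + C.Dm (C.pair x y) - C.hyperTorsion I J K x y := by
    rw [C.brac_eq_sub_torsion D, hT]
    rfl
  simp only [nij, hbrac]
  rw [nijGen_sub, nijGen_add, nijGen_sub_swap_eq_zero _ _ _ hDI hDJ,
    C.nijGen_Dm_pair_eq_zero I J h.1.pair_map_left h.2.1.pair_map_left h.I_J_eq_neg_J_I,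
    h.nijGen_hyperTorsion_eq_zero, add_zero, sub_zero]
end
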